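/- For every integer l > 1, every sign ε ∈ {+1,−1}, and every linear functional φ ∈ M₄(l)* satisfying φ∘i = ε·φ, the element PD(φ) lies in the (−ε)-eigenspace of the involution i, i.e. i(PD(φ)) = −ε·PD(φ). -/

import Mathlib

open scoped BigOperators

namespace MW

variable (l : ℕ)

/-- Index type for the basis symbols: `0 ↦ x²`, `1 ↦ xy`, `2 ↦ y²`. -/
abbrev Sym := Fin 3 × ZMod l × ZMod l

/-- The free ℂ-vector space on the symbols. -/
abbrev V := Sym l →₀ ℂ

/-- `gcd(u,v,l) = 1`. -/
def copr (u v : ZMod l) : Prop := Nat.gcd (Nat.gcd (ZMod.val u) (ZMod.val v)) l = 1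

instance (u v : ZMod l) : Decidable (copr l u v) := by unfold copr; infer_instance

noncomputable def X2 (u v : ZMod l) : V l := Finsupp.single (0, u, v) 1
noncomputable def XY (u v : ZMod l) : V l := Finsupp.single (1, u, v) 1
noncomputable def Y2 (u v : ZMod l) : V l := Finsupp.single (2, u, v) 1

/-- The relation subspace: the relations of Merel–Shokurov on coprime symbols,
together with the (dummy) basis vectors at non-coprime indices. -/
noncomputable def Rel : Submodule ℂ (V l) :=
  Submodule.span ℂ
    ({ w | ∃ u v, ¬ copr l u v ∧ (w = X2 l u v ∨ w = XY l u v ∨ w = Y2 l u v) } ∪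
     { w | ∃ u v, copr l u v ∧
        (w = X2 l u v + Y2 l v (-u) ∨
         w = XY l u v - XY l v (-u) ∨
         w = Y2 l u v + X2 l v (-u) ∨
         w = XY l v (-u - v) - XY l (-u - v) u + Y2 l (-u - v) u + X2 l u v - XY l u v) })

/-- The space of weight four modular symbols of level `l`. -/
abbrev M := V l ⧸ Rel l

noncomputable def x2 (u v : ZMod l) : M l := Submodule.Quotient.mk (X2 l u v)
noncomputable def xy (u v : ZMod l) : M l := Submodule.Quotient.mk (XY l u v)
noncomputable def y2 (u v : ZMod l) : M l := Submodule.Quotient.mk (Y2 l u v)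

/-- The class of `p₂·x²(u,v) + p₁·xy(u,v) + p₀·y²(u,v)` in `M l`. -/
noncomputable def pcl (p2 p1 p0 : ℂ) (u v : ZMod l) : M l :=
  p2 • x2 l u v + p1 • xy l u v + p0 • y2 l u v

/-- The linear map on `V l` underlying the involution `i`:
`x²(u,v) ↦ x²(-u,v)`, `xy(u,v) ↦ -xy(-u,v)`, `y²(u,v) ↦ y²(-u,v)`. -/
noncomputable def iV : V l →ₗ[ℂ] V l :=
  Finsupp.lift (V l) ℂ (Sym l) fun p =>
    if p.1 = 1 then -(Finsupp.single (1, -p.2.1, p.2.2) (1 : ℂ))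
    else Finsupp.single (p.1, -p.2.1, p.2.2) (1 : ℂ)

/-- The Poincaré duality map (as a function on the dual space). -/
noncomputable def PD [NeZero l] (φ : Module.Dual ℂ (M l)) : M l :=
  (24 : ℂ)⁻¹ • ∑ u : ZMod l, ∑ v : ZMod l,
    ( φ (pcl l 1 (-2) 1 (-v) (u + v) - pcl l 1 2 1 v (v - u)) • x2 l u v
      - (2 : ℂ) • φ (pcl l 0 (-1) 1 (-v) (u + v) + pcl l 0 1 1 v (v - u)) • xy l u v
      + φ (pcl l 0 0 1 (-v) (u + v) - pcl l 0 0 1 v (v - u)) • y2 l u v )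

end MW

open MW

section Involution

variable (l : ℕ)

lemma iV_X2 (u v : ZMod l) : iV l (X2 l u v) = X2 l (-u) v := by
  simp [iV, X2, Finsupp.lift_apply]

lemma iV_XY (u v : ZMod l) : iV l (XY l u v) = -XY l (-u) v := by
  simp [iV, XY, Finsupp.lift_apply]

lemma iV_Y2 (u v : ZMod l) : iV l (Y2 l u v) = Y2 l (-u) v := by
  simp [iV, Y2, Finsupp.lift_apply]

variable (hi : Rel l ≤ (Rel l).comap (iV l))

lemma mapQ_iV_x2 (u v : ZMod l) :
    Submodule.mapQ (Rel l) (Rel l) (iV l) hi (x2 l u v) = x2 l (-u) v := by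
  simp only [x2, Submodule.mapQ_apply, iV_X2]

lemma mapQ_iV_xy (u v : ZMod l) :
    Submodule.mapQ (Rel l) (Rel l) (iV l) hi (xy l u v) = -xy l (-u) v := by
  simp only [xy, Submodule.mapQ_apply, iV_XY, Submodule.Quotient.mk_neg]

lemma mapQ_iV_y2 (u v : ZMod l) :
    Submodule.mapQ (Rel l) (Rel l) (iV l) hi (y2 l u v) = y2 l (-u) v := by
  simp only [y2, Submodule.mapQ_apply, iV_Y2]

lemma mapQ_iV_pcl (p2 p1 p0 : ℂ) (u v : ZMod l) :
    Submodule.mapQ (Rel l) (Rel l) (iV l) hi (pcl l p2 p1 p0 u v)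
      = pcl l p2 (-p1) p0 (-u) v := by
  simp only [pcl, map_add, map_smul, mapQ_iV_x2, mapQ_iV_xy, mapQ_iV_y2, smul_neg, neg_smul]

lemma apply_pcl_of_comp_mapQ_iV {ε : ℂ} {φ : Module.Dual ℂ (M l)}
    (hφ : φ.comp (Submodule.mapQ (Rel l) (Rel l) (iV l) hi) = ε • φ)
    (p2 p1 p0 : ℂ) (u v : ZMod l) :
    φ (pcl l p2 (-p1) p0 (-u) v) = ε * φ (pcl l p2 p1 p0 u v) := by
  simpa [mapQ_iV_pcl] using LinearMap.congr_fun hφ (pcl l p2 p1 p0 u v)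

end Involution

lemma map_sum_sum_eq_smul_of_map_neg {G R N : Type*} [AddGroup G] [Fintype G] [Semiring R]
    [AddCommMonoid N] [Module R N] (T : N →ₗ[R] N) (c : R) (f : G → G → N)
    (hf : ∀ u v, T (f (-u) v) = c • f u v) :
    T (∑ u, ∑ v, f u v) = c • ∑ u, ∑ v, f u v := by
  calc T (∑ u, ∑ v, f u v) = ∑ u, ∑ v, T (f (-u) v) := by
        rw [← Equiv.sum_comp (Equiv.neg G)]; simp only [map_sum, Equiv.neg_apply]
    _ = c • ∑ u, ∑ v, f u v := by simp only [hf, Finset.smul_sum]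

section PoincareDuality

variable (l : ℕ) (φ : Module.Dual ℂ (M l))

noncomputable def pdSummand (u v : ZMod l) : M l :=
  φ (pcl l 1 (-2) 1 (-v) (u + v) - pcl l 1 2 1 v (v - u)) • x2 l u v
    - (2 : ℂ) • φ (pcl l 0 (-1) 1 (-v) (u + v) + pcl l 0 1 1 v (v - u)) • xy l u v
    + φ (pcl l 0 0 1 (-v) (u + v) - pcl l 0 0 1 v (v - u)) • y2 l u v

lemma PD_eq_sum_pdSummand [NeZero l] :
    PD l φ = (24 : ℂ)⁻¹ • ∑ u, ∑ v, pdSummand l φ u v := rfl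

/-- Under `u ↦ -u` the two points `(-v, u+v)` and `(v, v-u)` at which `φ` is evaluated are
exchanged up to the sign of their first coordinate, which is what `hφ` controls. -/
lemma mapQ_iV_pdSummand_neg (hi : Rel l ≤ (Rel l).comap (iV l)) {ε : ℂ}
    (hφ : φ.comp (Submodule.mapQ (Rel l) (Rel l) (iV l) hi) = ε • φ) (u v : ZMod l) :
    Submodule.mapQ (Rel l) (Rel l) (iV l) hi (pdSummand l φ (-u) v)
      = (-ε) • pdSummand l φ u v := by
  have key := apply_pcl_of_comp_mapQ_iV l hi hφ
  have a1 := key 1 (-2) 1 (-v) (u + v)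
  have a2 := key 1 2 1 v (v - u)
  have b1 := key 0 (-1) 1 (-v) (u + v)
  have b2 := key 0 1 1 v (v - u)
  have c1 := key 0 0 1 (-v) (u + v)
  have c2 := key 0 0 1 v (v - u)
  simp only [neg_neg, neg_zero] at a1 a2 b1 b2 c1 c2
  simp only [pdSummand, map_add, map_sub, map_smul, mapQ_iV_x2, mapQ_iV_xy, mapQ_iV_y2, neg_neg]
  rw [show -u + v = v - u by ring, show v - -u = u + v by ring]
  match_scalars
  · linear_combination a2 - a1
  · linear_combination 2 * b1 + 2 * b2
  · linear_combination c2 - c1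

end PoincareDuality

open MW in
theorem stmt9_general (l : ℕ) [NeZero l]
    (hi : Rel l ≤ (Rel l).comap (iV l)) (ε : ℂ)
    (φ : Module.Dual ℂ (M l))
    (hφ : φ.comp (Submodule.mapQ (Rel l) (Rel l) (iV l) hi) = ε • φ) :
    Submodule.mapQ (Rel l) (Rel l) (iV l) hi (PD l φ) = (-ε) • PD l φ := by
  rw [PD_eq_sum_pdSummand, map_smul, smul_comm,
    map_sum_sum_eq_smul_of_map_neg _ _ _ (mapQ_iV_pdSummand_neg l φ hi hφ)]

open MW in
theorem stmt9 (l : ℕ) (hl : 1 < l) [NeZero l]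
    (hi : Rel l ≤ (Rel l).comap (iV l)) (ε : ℂ) (hε : ε = 1 ∨ ε = -1)
    (φ : Module.Dual ℂ (M l))
    (hφ : φ.comp (Submodule.mapQ (Rel l) (Rel l) (iV l) hi) = ε • φ) :
    Submodule.mapQ (Rel l) (Rel l) (iV l) hi (PD l φ) = (-ε) • PD l φ :=
  stmt9_general l hi ε φ hφ
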